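/- For all positive integers p and n, the p×p determinant det_{0≤i,j<p}( C(2n, n+i−j) ) equals C(2n,n)^p · Π_{i=0}^{p−1} [ i! · (2n+i)!/(2n)! · ( n!/(n+i)! )² ], where C(a,b) denotes the binomial coefficient. -/

import Mathlib

/-!
With `a = b = n`, the matrix is the Toeplitz matrix `T_{a,b}(p) = (C(a + b, a + i - j))_{i,j < p}`.
Dodgson condensation (the Desnanot–Jacobi identity) expresses `det T_{a,b}(p + 2)` through
`det T_{a,b}(p + 1)`, `det T_{a,b}(p)` and `det T_{a-1,b+1}(p + 1)`, `det T_{a+1,b-1}(p + 1)`.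
MacMahon's product `∏_{i<p} (a + b + i)! i! / ((a + i)! (b + i)!)`, the number of plane
partitions in an `a × b × p` box, obeys the same recursion, has the same values for `p ≤ 1`,
and equals `1` when `a = 0` or `b = 0`, where `T_{a,b}(p)` is unitriangular; so the two agree,
and at `a = b = n` the product is the stated one.
-/

/-- Binomial coefficient with integer lower argument, `0` outside range. -/
def ichoose (a : ℕ) (b : ℤ) : ℕ := if 0 ≤ b then a.choose b.toNat else 0

open Finset
open scoped Nat

namespace Matrix

variable {R : Type*}

section CommRing

variable [CommRing R]

-- Each bordered minor is `det D` times an entry of the `2 × 2` Schur complement of `D`.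
theorem det_mul_det_toBlocks₂₂ {n : Type*} [Fintype n] [DecidableEq n]
    (B : Matrix (Fin 2 ⊕ n) (Fin 2 ⊕ n) R) (hD : IsUnit B.toBlocks₂₂.det) :
    B.det * B.toBlocks₂₂.det =
      (B.submatrix (Sum.map (fun _ : Unit => 0) id) (Sum.map (fun _ : Unit => 0) id)).det *
          (B.submatrix (Sum.map (fun _ : Unit => 1) id) (Sum.map (fun _ : Unit => 1) id)).det -
        (B.submatrix (Sum.map (fun _ : Unit => 0) id) (Sum.map (fun _ : Unit => 1) id)).det *
          (B.submatrix (Sum.map (fun _ : Unit => 1) id) (Sum.map (fun _ : Unit => 0) id)).det := by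
  set D := B.toBlocks₂₂
  have : Invertible D := invertibleOfIsUnitDet D hD
  set X := B.toBlocks₁₁ - B.toBlocks₁₂ * ⅟D * B.toBlocks₂₁
  have hB : B.det = D.det * X.det := by
    conv_lhs => rw [← fromBlocks_toBlocks B]
    exact det_fromBlocks₂₂ _ _ _ _
  have hminor (a b : Fin 2) :
      (B.submatrix (Sum.map (fun _ : Unit => a) id) (Sum.map (fun _ : Unit => b) id)).det =
        D.det * X a b := by
    have : B.submatrix (Sum.map (fun _ : Unit => a) id) (Sum.map (fun _ : Unit => b) id) =
        fromBlocks (of fun _ _ => B (.inl a) (.inl b)) (of fun _ l => B (.inl a) (.inr l))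
          (of fun k _ => B (.inr k) (.inl b)) D := by
      ext (i | i) (j | j) <;> rfl
    rw [this, det_fromBlocks₂₂, det_unique (n := Unit)]
    simp [X, sub_apply, mul_apply, toBlocks₁₁, toBlocks₁₂, toBlocks₂₁]
  rw [hB, hminor, hminor, hminor, hminor, det_fin_two]
  ring

theorem det_submatrix_mul_det_submatrix {ι κ : Type*} [Fintype ι] [DecidableEq ι]
    [Fintype κ] [DecidableEq κ] (e f : ι ≃ κ) (M N : Matrix κ κ R) :
    (M.submatrix e f).det * (N.submatrix f e).det = M.det * N.det := by
  have hM : M.submatrix e f = (M.submatrix e e).submatrix id (f.trans e.symm) := by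
    ext; simp
  have hN : N.submatrix f e = (N.submatrix e e).submatrix (f.trans e.symm) id := by
    ext; simp
  rw [hM, hN, det_permute', det_permute, det_submatrix_equiv_self, det_submatrix_equiv_self,
    mul_mul_mul_comm, ← Int.cast_mul, ← Units.val_mul, Int.units_mul_self]
  simp [mul_comm]

theorem desnanot_jacobi {m : ℕ} (A : Matrix (Fin (m + 2)) (Fin (m + 2)) R)
    (h : IsUnit (A.submatrix (fun i : Fin m => i.castSucc.succ) (fun i => i.castSucc.succ)).det) :
    A.det * (A.submatrix (fun i : Fin m => i.castSucc.succ) (fun i => i.castSucc.succ)).det =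
      (A.submatrix Fin.castSucc Fin.castSucc).det * (A.submatrix Fin.succ Fin.succ).det -
        (A.submatrix Fin.castSucc Fin.succ).det * (A.submatrix Fin.succ Fin.castSucc).det := by
  have bij {k : ℕ} {α : Type} [Fintype α] (f : α → Fin k) (hf : f.Injective)
      (hcard : Fintype.card α = k) : f.Bijective :=
    (Fintype.bijective_iff_injective_and_card f).2 ⟨hf, by simpa using hcard⟩
  let e : Fin 2 ⊕ Fin m ≃ Fin (m + 2) := .ofBijective
    (Sum.elim ![0, Fin.last _] fun i => i.castSucc.succ) (bij _ (by
      refine Function.Injective.sumElim ?_ ?_ ?_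
      · intro a b; fin_cases a <;> fin_cases b <;> simp [Fin.ext_iff]
      · intro a b hab; simpa using hab
      · intro a i; fin_cases a <;> simp [Fin.ext_iff]; omega) (by simp; omega))
  let first : Unit ⊕ Fin m ≃ Fin (m + 1) := .ofBijective (Sum.elim (fun _ => 0) Fin.succ)
    (bij _ ((Function.injective_of_subsingleton _).sumElim (Fin.succ_injective _)
      fun _ i => (Fin.succ_ne_zero i).symm) (by simp; omega))
  let last : Unit ⊕ Fin m ≃ Fin (m + 1) :=
    .ofBijective (Sum.elim (fun _ => Fin.last m) Fin.castSucc)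
      (bij _ ((Function.injective_of_subsingleton _).sumElim (Fin.castSucc_injective _)
        fun _ i => (Fin.castSucc_ne_last i).symm) (by simp; omega))
  have key := det_mul_det_toBlocks₂₂ (A.submatrix e e) h
  rw [det_submatrix_equiv_self] at key
  have hminor (r c : Fin 2) (fr fc : Fin (m + 1) → Fin (m + 2))
      (er ec : Unit ⊕ Fin m ≃ Fin (m + 1))
      (hr : e ∘ Sum.map (fun _ => r) id = fr ∘ er)
      (hc : e ∘ Sum.map (fun _ => c) id = fc ∘ ec) :
      (A.submatrix e e).submatrix (Sum.map (fun _ : Unit => r) id)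
        (Sum.map (fun _ : Unit => c) id) = (A.submatrix fr fc).submatrix er ec := by
    simp only [submatrix_submatrix, hr, hc]
  have hfirst : e ∘ Sum.map (fun _ => 0) id = Fin.castSucc ∘ first := by
    ext (i | i) <;> rfl
  have hlast : e ∘ Sum.map (fun _ => 1) id = Fin.succ ∘ last := by
    ext (i | i) <;> rfl
  rwa [hminor 0 0 _ _ _ _ hfirst hfirst, hminor 1 1 _ _ _ _ hlast hlast,
    hminor 0 1 _ _ _ _ hfirst hlast, hminor 1 0 _ _ _ _ hlast hfirst,
    det_submatrix_equiv_self, det_submatrix_equiv_self, det_submatrix_mul_det_submatrix] at key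

end CommRing

def toeplitz (f : ℤ → R) (p : ℕ) : Matrix (Fin p) (Fin p) R := of fun i j => f (i - j)

variable (f : ℤ → R)

theorem toeplitz_submatrix_castSucc_castSucc (p : ℕ) :
    (toeplitz f (p + 1)).submatrix Fin.castSucc Fin.castSucc = toeplitz f p :=
  rfl

theorem toeplitz_submatrix_succ_succ (p : ℕ) :
    (toeplitz f (p + 1)).submatrix Fin.succ Fin.succ = toeplitz f p := by
  ext i j; simp [toeplitz]

theorem toeplitz_submatrix_castSucc_succ (p : ℕ) :
    (toeplitz f (p + 1)).submatrix Fin.castSucc Fin.succ = toeplitz (fun k => f (k - 1)) p := by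
  ext i j; simp [toeplitz]; ring_nf

theorem toeplitz_submatrix_succ_castSucc (p : ℕ) :
    (toeplitz f (p + 1)).submatrix Fin.succ Fin.castSucc = toeplitz (fun k => f (k + 1)) p := by
  ext i j; simp [toeplitz]; ring_nf

variable [CommRing R]

theorem det_toeplitz_condensation (p : ℕ) (h : IsUnit (toeplitz f p).det) :
    (toeplitz f (p + 2)).det * (toeplitz f p).det =
      (toeplitz f (p + 1)).det ^ 2 -
        (toeplitz (fun k => f (k - 1)) (p + 1)).det *
          (toeplitz (fun k => f (k + 1)) (p + 1)).det := by
  have hinner : (toeplitz f (p + 2)).submatrix (fun i : Fin p => i.castSucc.succ)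
      (fun i => i.castSucc.succ) = toeplitz f p := by
    rw [← toeplitz_submatrix_succ_succ f p]; rfl
  have := desnanot_jacobi (toeplitz f (p + 2)) (hinner ▸ h)
  rwa [hinner, toeplitz_submatrix_castSucc_castSucc, toeplitz_submatrix_succ_succ,
    toeplitz_submatrix_castSucc_succ, toeplitz_submatrix_succ_castSucc, ← sq] at this

theorem det_toeplitz_of_neg_eq_zero {f : ℤ → R} (hf : ∀ k < 0, f k = 0) (p : ℕ) :
    (toeplitz f p).det = f 0 ^ p := by
  have : (toeplitz f p).IsLowerTriangular := fun i j hij => hf _ (by simpa using hij)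
  rw [det_of_isLowerTriangular _ this]
  simp [toeplitz]

theorem det_toeplitz_of_pos_eq_zero {f : ℤ → R} (hf : ∀ k > 0, f k = 0) (p : ℕ) :
    (toeplitz f p).det = f 0 ^ p := by
  have : (toeplitz f p).IsUpperTriangular := fun i j hij => hf _ (by simpa using hij)
  rw [det_of_isUpperTriangular this]
  simp [toeplitz]

end Matrix

def macMahon (a b c : ℕ) : ℚ :=
  ∏ i ∈ range c, ((a + b + i)! * i ! : ℚ) / ((a + i)! * (b + i)!)

theorem macMahon_succ (a b c : ℕ) :
    macMahon a b (c + 1) = macMahon a b c * ((a + b + c)! * c ! / ((a + c)! * (b + c)!)) :=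
  prod_range_succ _ _

theorem macMahon_pos (a b c : ℕ) : 0 < macMahon a b c :=
  prod_pos fun _ _ => by positivity

theorem macMahon_one (a b : ℕ) : macMahon a b 1 = (a + b).choose a := by
  rw [Nat.cast_choose ℚ (Nat.le_add_right a b), Nat.add_sub_cancel_left]
  simp [macMahon]

theorem macMahon_zero_left (b c : ℕ) : macMahon 0 b c = 1 :=
  prod_eq_one fun i _ => by rw [zero_add, zero_add, mul_comm, div_self (by positivity)]

theorem macMahon_zero_middle (a c : ℕ) : macMahon a 0 c = 1 :=
  prod_eq_one fun i _ => by rw [add_zero, zero_add, div_self (by positivity)]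

theorem macMahon_succ_left_mul (a b c : ℕ) :
    macMahon (a + 1) b c * ((a + c)! * b !) = macMahon a (b + 1) c * (a ! * (b + c)!) := by
  induction c with
  | zero => simp [macMahon, mul_comm]
  | succ c ih =>
    rw [macMahon_succ, macMahon_succ, show a + 1 + b + c = a + (b + 1) + c by ring,
      show a + 1 + c = a + c + 1 by ring, show b + 1 + c = b + c + 1 by ring,
      show a + (c + 1) = a + c + 1 by ring, show b + (c + 1) = b + c + 1 by ring]
    simp only [Nat.factorial_succ, Nat.cast_mul]
    field_simp
    linear_combination ih

theorem macMahon_succ_succ_mul (a b c : ℕ) :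
    macMahon a b (c + 2) * macMahon a b c * ((a + c + 1 : ℚ) * (b + c + 1)) =
      macMahon a b (c + 1) ^ 2 * ((a + b + c + 1 : ℚ) * (c + 1)) := by
  rw [macMahon_succ a b (c + 1), macMahon_succ a b c]
  simp only [← add_assoc, Nat.factorial_succ, Nat.cast_mul, Nat.cast_add, Nat.cast_one]
  field_simp

theorem macMahon_shift_mul (a b c : ℕ) :
    macMahon (a + 2) b c * macMahon a (b + 2) c * ((a + c + 1 : ℚ) * (b + c + 1)) =
      macMahon (a + 1) (b + 1) c ^ 2 * ((a + 1 : ℚ) * (b + 1)) := by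
  have h3 := macMahon_succ_left_mul (a + 1) b c
  have h4 := macMahon_succ_left_mul a (b + 1) c
  rw [add_right_comm a 1 c, show a + 1 + 1 = a + 2 from rfl] at h3
  rw [add_right_comm b 1 c, show b + 1 + 1 = b + 2 from rfl] at h4
  simp only [Nat.factorial_succ, Nat.cast_mul, Nat.cast_add, Nat.cast_one] at h3 h4
  have hK : ((a + c)! * b ! * a ! * (b + c)! : ℚ) ≠ 0 := by positivity
  apply mul_right_cancel₀ hK
  linear_combination (macMahon a (b + 2) c * (b + c + 1) * a ! * (b + c)!) * h3 -
    (macMahon (a + 1) (b + 1) c * (a + 1) * a ! * (b + c)!) * h4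

theorem macMahon_condensation (a b c : ℕ) :
    macMahon (a + 1) (b + 1) (c + 2) * macMahon (a + 1) (b + 1) c =
      macMahon (a + 1) (b + 1) (c + 1) ^ 2 -
        macMahon a (b + 2) (c + 1) * macMahon (a + 2) b (c + 1) := by
  have h1 := macMahon_succ_succ_mul (a + 1) (b + 1) c
  have h2 := macMahon_shift_mul a b (c + 1)
  have hK : ((a + c + 2 : ℚ) * (b + c + 2)) ≠ 0 := by positivity
  apply mul_right_cancel₀ hK
  push_cast at h1 h2
  linear_combination h1 + h2

theorem ichoose_of_neg {a : ℕ} {b : ℤ} (h : b < 0) : ichoose a b = 0 :=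
  if_neg (not_le.2 h)

theorem ichoose_of_lt {a : ℕ} {b : ℤ} (h : (a : ℤ) < b) : ichoose a b = 0 := by
  rw [ichoose, if_pos (by omega), Nat.choose_eq_zero_of_lt (by omega)]

theorem ichoose_natCast (a b : ℕ) : ichoose a b = a.choose b := by
  simp [ichoose]

open Matrix

theorem det_toeplitz_ichoose : ∀ p a b : ℕ,
    (toeplitz (fun k => (ichoose (a + b) (a + k) : ℚ)) p).det = macMahon a b p
  | 0, a, b => by simp [macMahon]
  | 1, a, b => by simp [toeplitz, macMahon_one, ichoose_natCast]
  | p + 2, 0, b => by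
    rw [det_toeplitz_of_neg_eq_zero (fun k hk => by simp [ichoose_of_neg hk]), macMahon_zero_left]
    simp only [add_zero, ichoose_natCast, Nat.choose_zero_right, Nat.cast_one, one_pow]
  | p + 2, a + 1, 0 => by
    rw [det_toeplitz_of_pos_eq_zero (fun k hk => by rw [ichoose_of_lt (by omega), Nat.cast_zero]),
      macMahon_zero_middle]
    simp only [add_zero, ichoose_natCast, Nat.choose_self, Nat.cast_one, one_pow]
  | p + 2, a + 1, b + 1 => by
    have hp := det_toeplitz_ichoose p (a + 1) (b + 1)
    have hcond := det_toeplitz_condensation _ p (by rw [hp]; exact (macMahon_pos ..).ne'.isUnit)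
    have hl : (fun k : ℤ => (ichoose (a + 1 + (b + 1)) (↑(a + 1) + (k - 1)) : ℚ)) =
        fun k => (ichoose (a + (b + 2)) (a + k) : ℚ) := by
      funext k; congr 2 <;> push_cast <;> ring
    have hr : (fun k : ℤ => (ichoose (a + 1 + (b + 1)) (↑(a + 1) + (k + 1)) : ℚ)) =
        fun k => (ichoose (a + 2 + b) (↑(a + 2) + k) : ℚ) := by
      funext k; congr 2 <;> push_cast <;> ring
    rw [hl, hr, hp, det_toeplitz_ichoose (p + 1) (a + 1) (b + 1),
      det_toeplitz_ichoose (p + 1) a (b + 2), det_toeplitz_ichoose (p + 1) (a + 2) b,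
      ← macMahon_condensation] at hcond
    exact mul_right_cancel₀ (macMahon_pos _ _ _).ne' hcond

theorem stmt3 (p n : ℕ) :
    Matrix.det (Matrix.of fun i j : Fin p =>
        (ichoose (2*n) ((n : ℤ) + (i : ℤ) - (j : ℤ)) : ℚ)) =
      ((2*n).choose n : ℚ)^p *
        ∏ i ∈ Finset.range p,
          ((i.factorial : ℚ) * (((2*n+i).factorial : ℚ) / ((2*n).factorial : ℚ))
            * ((n.factorial : ℚ) / ((n+i).factorial : ℚ))^2) := by
  have hM : (of fun i j : Fin p => (ichoose (2 * n) ((n : ℤ) + (i : ℤ) - (j : ℤ)) : ℚ)) =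
      toeplitz (fun k => (ichoose (n + n) (n + k) : ℚ)) p := by
    ext i j; simp [toeplitz, two_mul, add_sub_assoc]
  rw [hM, det_toeplitz_ichoose, macMahon, pow_eq_prod_const, ← prod_mul_distrib]
  refine prod_congr rfl fun i _ => ?_
  rw [Nat.cast_choose ℚ (by omega), show 2 * n - n = n by omega, two_mul]
  field_simp
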